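/- arXiv:2402.09826 — 2 statements merged into one kernel-verified Lean document; each statement's English description precedes it below -/
import Mathlib

section
/- With G and π_r as above and k ∈ ℤ nonzero, consider the vector ξ_k(s) = 2cos(ks) = e^{iks} + e^{-iks} in L²(ℝ/2πℤ). If (0,t) lies in the projective stabiliser of [ξ_k], i.e. there exists λ ∈ 𝕋 with cos(k(s−t)) = λ cos(ks) for all s, then λ = ±1 and t ∈ (π/k)ℤ. In particular G_{[ξ_k]} ∩ ({0}×ℝ) = {0} × (π/k)ℤ, which is a proper subgroup of G_{[η_k]} ∩ ({0}×ℝ) = {0} × ℝ. -/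
/-! Evaluating `cos (a (s - t)) = c cos (a s)` at `s = t` gives `1 = c cos (a t)`, so
`|cos (a t)| = 1` when `‖c‖ = 1`; hence `c = cos (a t) = ±1` and `a t ∈ πℤ`.
Conversely, shifting by `n π / a` multiplies `cos (a s)` by `(-1)ⁿ`. The lattice
`(π / a)ℤ` misses `π / (2a)`, so it is not all of `ℝ`. -/

open Real

theorem cos_mul_eq_one_or_neg_one_of_cos_sub_eq_mul_cos {a t : ℝ} {c : ℂ} (hc : ‖c‖ = 1)
    (h : ∀ s : ℝ, (cos (a * (s - t)) : ℂ) = c * (cos (a * s) : ℂ)) :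
    c = cos (a * t) ∧ (cos (a * t) = 1 ∨ cos (a * t) = -1) := by
  have h_one : (1 : ℂ) = c * cos (a * t) := by simpa using h t
  have h_abs : |cos (a * t)| = 1 := by
    simpa only [norm_one, norm_mul, hc, Complex.norm_real, Real.norm_eq_abs, one_mul, eq_comm]
      using congrArg norm h_one
  have h_cos := (abs_eq zero_le_one).mp h_abs
  refine ⟨?_, h_cos⟩
  have h_sq : (cos (a * t) : ℂ) ^ 2 = 1 := by
    rcases h_cos with h_cos | h_cos <;> simp [h_cos]
  linear_combination -(cos (a * t) : ℂ) * h_one - c * h_sq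

theorem eq_one_or_neg_one_and_exists_eq_int_mul_pi_div_of_cos_sub_eq_mul_cos {a t : ℝ} (ha : a ≠ 0)
    {c : ℂ} (hc : ‖c‖ = 1)
    (h : ∀ s : ℝ, (cos (a * (s - t)) : ℂ) = c * (cos (a * s) : ℂ)) :
    (c = 1 ∨ c = -1) ∧ ∃ n : ℤ, t = n * (π / a) := by
  obtain ⟨rfl, h_cos⟩ := cos_mul_eq_one_or_neg_one_of_cos_sub_eq_mul_cos hc h
  obtain ⟨n, hn⟩ := sin_eq_zero_iff.mp (sin_eq_zero_iff_cos_eq.mpr h_cos)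
  refine ⟨by rcases h_cos with h_cos | h_cos <;> simp [h_cos], n, ?_⟩
  field_simp
  linarith

theorem cos_mul_sub_int_mul_pi_div {a : ℝ} (ha : a ≠ 0) (s : ℝ) (n : ℤ) :
    cos (a * (s - n * (π / a))) = (-1) ^ n * cos (a * s) := by
  rw [← cos_sub_int_mul_pi]
  congr 1
  field_simp

theorem setOf_exists_eq_int_mul_ne_univ {a : ℝ} (ha : a ≠ 0) :
    {t : ℝ | ∃ n : ℤ, t = n * a} ≠ Set.univ := by
  intro h_univ
  obtain ⟨n, hn⟩ : ∃ n : ℤ, a / 2 = n * a := Set.eq_univ_iff_forall.mp h_univ (a / 2)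
  have h_two : ((2 * n : ℤ) : ℝ) = 1 := by
    push_cast
    field_simp at hn
    linarith
  have : 2 * n = 1 := by exact_mod_cast h_two
  omega

theorem projective_stabiliser_cos_k (k : ℤ) (hk : k ≠ 0) :
    (∀ (t : ℝ) (c : ℂ), ‖c‖ = 1 →
      (∀ s : ℝ, (Real.cos (k * (s - t)) : ℂ) = c * (Real.cos (k * s) : ℂ)) →
      (c = 1 ∨ c = -1) ∧ ∃ n : ℤ, t = n * (Real.pi / k)) ∧
    ({t : ℝ | ∃ c : ℂ, ‖c‖ = 1 ∧
        ∀ s : ℝ, (Real.cos (k * (s - t)) : ℂ) = c * (Real.cos (k * s) : ℂ)}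
      = {t : ℝ | ∃ n : ℤ, t = n * (Real.pi / k)}) ∧
    {t : ℝ | ∃ n : ℤ, t = n * (Real.pi / k)} ≠ (Set.univ : Set ℝ) := by
  have hk' : (k : ℝ) ≠ 0 := Int.cast_ne_zero.mpr hk
  have h_stab : ∀ (t : ℝ) (c : ℂ), ‖c‖ = 1 →
      (∀ s : ℝ, (cos (k * (s - t)) : ℂ) = c * (cos (k * s) : ℂ)) →
      (c = 1 ∨ c = -1) ∧ ∃ n : ℤ, t = n * (π / k) := fun _ _ hc h =>
    eq_one_or_neg_one_and_exists_eq_int_mul_pi_div_of_cos_sub_eq_mul_cos hk' hc h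
  refine ⟨h_stab, Set.ext fun t => ⟨fun ⟨c, hc, h⟩ => (h_stab t c hc h).2, ?_⟩,
    setOf_exists_eq_int_mul_ne_univ (div_ne_zero pi_ne_zero hk')⟩
  rintro ⟨n, rfl⟩
  refine ⟨(-1) ^ n, by simp, fun s => ?_⟩
  rw [cos_mul_sub_int_mul_pi_div hk']
  push_cast
  rfl
end

section
/- Let g be the 5-dimensional Lie algebra with basis X₁,…,X₅ and nonzero brackets [X₂,X₃] = X₁, [X₂,X₅] = X₂, [X₃,X₅] = −X₃, [X₄,X₅] = X₁, and let h = span{X₁, X₂, X₄}. Then the quotient Lie algebra g/h is isomorphic to the 2-dimensional nonabelian Lie algebra (the Lie algebra of the affine group of the line); in particular there exists X ∈ g/h with Tr(ad_X) ≠ 0, so g/h is not unimodular. -/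
/-- Bracket of the 5-dim Lie algebra with [X₂,X₃]=X₁, [X₂,X₅]=X₂, [X₃,X₅]=−X₃,
[X₄,X₅]=X₁ (basis indices 0,…,4). -/
def br5 : (Fin 5 → ℝ) → (Fin 5 → ℝ) → (Fin 5 → ℝ) :=
  fun u v => ![u 1 * v 2 - u 2 * v 1 + u 3 * v 4 - u 4 * v 3,
               u 1 * v 4 - u 4 * v 1,
               -(u 2 * v 4 - u 4 * v 2),
               0, 0]

/-- Bracket of the 2-dimensional nonabelian Lie algebra with basis {A, B} (indices 0, 1)
and [A,B] = A: the Lie algebra of the affine group of the line. -/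
def brA : (Fin 2 → ℝ) → (Fin 2 → ℝ) → (Fin 2 → ℝ) :=
  fun a b => ![a 0 * b 1 - a 1 * b 0, 0]

def hS : Submodule ℝ (Fin 5 → ℝ) :=
  Submodule.span ℝ ({Pi.single 0 1, Pi.single 1 1, Pi.single 3 1} : Set (Fin 5 → ℝ))

def ψ : (Fin 5 → ℝ) →ₗ[ℝ] (Fin 2 → ℝ) where
  toFun u := ![u 2, -u 4]
  map_add' u v := by
    funext i; fin_cases i <;> simp <;> ring
  map_smul' c u := by
    funext i; fin_cases i <;> simp <;> ring

def σ' : (Fin 2 → ℝ) →ₗ[ℝ] (Fin 5 → ℝ) where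
  toFun a := ![0, 0, a 0, 0, -a 1]
  map_add' a b := by
    funext i; fin_cases i <;> simp <;> ring
  map_smul' c a := by
    funext i; fin_cases i <;> simp <;> ring

lemma hle : hS ≤ LinearMap.ker ψ := by
  rw [hS, Submodule.span_le]
  intro x hx
  simp only [Set.mem_insert_iff, Set.mem_singleton_iff] at hx
  rcases hx with rfl | rfl | rfl <;>
    · simp only [SetLike.mem_coe, LinearMap.mem_ker]
      funext i; fin_cases i <;> simp [ψ, Pi.single_apply]

lemma key1 : (hS.liftQ ψ hle).comp ((hS.mkQ).comp σ') = LinearMap.id := by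
  apply LinearMap.ext
  intro a
  funext i
  fin_cases i <;> simp [σ', ψ]

lemma key2 : ((hS.mkQ).comp σ').comp (hS.liftQ ψ hle) = LinearMap.id := by
  apply Submodule.linearMap_qext
  apply LinearMap.ext
  intro u
  simp only [LinearMap.comp_apply, Submodule.liftQ_apply, Submodule.mkQ_apply,
    LinearMap.id_comp]
  rw [Submodule.Quotient.eq]
  have : σ' (ψ u) - u =
      (-u 0) • (Pi.single 0 1 : Fin 5 → ℝ) + (-u 1) • (Pi.single 1 1 : Fin 5 → ℝ) + (-u 3) • (Pi.single 3 1 : Fin 5 → ℝ) := by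
    funext i; fin_cases i <;> simp [σ', ψ, Pi.single_apply]
  rw [this, hS]
  refine Submodule.add_mem _ (Submodule.add_mem _ ?_ ?_) ?_ <;>
    exact Submodule.smul_mem _ _ (Submodule.subset_span (by simp))

noncomputable def φ' : ((Fin 5 → ℝ) ⧸ hS) ≃ₗ[ℝ] (Fin 2 → ℝ) :=
  LinearEquiv.ofLinear (hS.liftQ ψ hle) ((hS.mkQ).comp σ') key1 key2

/- STATEMENT 10 -/
theorem quotient_iso_affine_algebra :
    (∃ φ : ((Fin 5 → ℝ) ⧸ Submodule.span ℝ
          ({Pi.single 0 1, Pi.single 1 1, Pi.single 3 1} : Set (Fin 5 → ℝ)))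
        ≃ₗ[ℝ] (Fin 2 → ℝ),
      ∀ u v : Fin 5 → ℝ,
        φ (Submodule.Quotient.mk (br5 u v))
          = brA (φ (Submodule.Quotient.mk u)) (φ (Submodule.Quotient.mk v))) ∧
    (∃ a : Fin 2 → ℝ, ∑ i : Fin 2, brA a (Pi.single i 1) i ≠ 0) := by
  constructor
  · refine ⟨φ', fun u v => ?_⟩
    show (hS.liftQ ψ hle) (Submodule.Quotient.mk (br5 u v))
      = brA ((hS.liftQ ψ hle) (Submodule.Quotient.mk u))
            ((hS.liftQ ψ hle) (Submodule.Quotient.mk v))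
    simp only [Submodule.liftQ_apply]
    funext i
    fin_cases i <;> simp [ψ, br5, brA] <;> ring
  · refine ⟨![0, 1], ?_⟩
    rw [Fin.sum_univ_two]
    simp [brA, Pi.single_apply]
end
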